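/- arXiv:1502.04605 — 3 statements merged into one kernel-verified Lean document; each statement's English description precedes it below -/
import Mathlib

section
/- If f : [a,b] → ℝ is convex and integrable on [a,b] with a < b, then (2/(b-a)) ∫_a^b f(x) dx ≤ (f(a) + f(b))/2 + f((a+b)/2). -/
/-!
A convex function lies below its chord, so its integral over an interval is at most the
trapezoid value `(b - a) (f a + f b) / 2` (the right half of the Hermite–Hadamard inequality).
Applying this on `[a, m]` and `[m, b]` with `m = (a + b) / 2` and adding gives the claim.
-/

open Set intervalIntegral

noncomputable def supOn (a b : ℝ) (f : ℝ → ℝ) : ℝ := ⨆ x : Set.Icc a b, |f x|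

def IsC2On (a b : ℝ) (g g' g'' : ℝ → ℝ) : Prop :=
  (∀ x ∈ Set.Icc a b, HasDerivWithinAt g (g' x) (Set.Icc a b) x) ∧
  (∀ x ∈ Set.Icc a b, HasDerivWithinAt g' (g'' x) (Set.Icc a b) x) ∧
  ContinuousOn g'' (Set.Icc a b)

noncomputable def KF (a b t : ℝ) (f : ℝ → ℝ) : ℝ :=
  sInf {v : ℝ | ∃ g g' g'', IsC2On a b g g' g'' ∧
    v = supOn a b (fun x => f x - g x) + t * supOn a b g''}

noncomputable def bullen (a b : ℝ) (f : ℝ → ℝ) : ℝ :=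
  (f a + f b) / 2 + f ((a + b) / 2) - (2 / (b - a)) * ∫ x in a..b, f x

noncomputable def bullenC (a b : ℝ) (n : ℕ) (x : ℕ → ℝ) (f : ℝ → ℝ) : ℝ :=
  (1 / (b - a)) * ∑ i ∈ Finset.range n, (x (i+1) - x i) *
    ((f (x i) + f (x (i+1))) / 2 + f ((x i + x (i+1)) / 2)
      - (2 / (x (i+1) - x i)) * ∫ t in (x i)..(x (i+1)), f t)

noncomputable def omega1 (a b : ℝ) (f : ℝ → ℝ) (h : ℝ) : ℝ :=
  sSup {v : ℝ | ∃ x ∈ Set.Icc a b, ∃ y ∈ Set.Icc a b, |x - y| ≤ h ∧ v = |f x - f y|}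

noncomputable def omega2 (a b : ℝ) (f : ℝ → ℝ) (h : ℝ) : ℝ :=
  sSup {v : ℝ | ∃ x t : ℝ, 0 ≤ t ∧ t ≤ h ∧ x - t ∈ Set.Icc a b ∧ x + t ∈ Set.Icc a b ∧
    v = |f (x + t) - 2 * f x + f (x - t)|}

open MeasureTheory (volume)

lemma integral_secant {a b : ℝ} (hab : a ≠ b) (u v : ℝ) :
    ∫ x in a..b, ((b - x) * u + (x - a) * v) / (b - a) = (b - a) * (u + v) / 2 := by
  have hba : b - a ≠ 0 := sub_ne_zero.2 hab.symm
  have h_affine : ∀ x, ((b - x) * u + (x - a) * v) / (b - a) =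
      (v - u) / (b - a) * x + (b * u - a * v) / (b - a) := by
    intro x
    field_simp
    ring
  simp only [h_affine]
  rw [integral_add ((continuous_const_mul _).intervalIntegrable _ _) intervalIntegrable_const,
    integral_const_mul, integral_id, integral_const, smul_eq_mul]
  field_simp
  ring

lemma ConvexOn.le_secant {a b x : ℝ} {f : ℝ → ℝ} (hf : ConvexOn ℝ (Icc a b) f) (hab : a < b)
    (hx : x ∈ Icc a b) : f x ≤ ((b - x) * f a + (x - a) * f b) / (b - a) := by
  have hba : 0 < b - a := sub_pos.2 hab
  have hx_comb : (b - x) / (b - a) * a + (x - a) / (b - a) * b = x := by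
    field_simp
    ring
  have h := hf.2 (left_mem_Icc.2 hab.le) (right_mem_Icc.2 hab.le)
    (div_nonneg (sub_nonneg.2 hx.2) hba.le) (div_nonneg (sub_nonneg.2 hx.1) hba.le)
    (by field_simp; ring)
  rw [smul_eq_mul, smul_eq_mul, hx_comb] at h
  calc f x ≤ (b - x) / (b - a) * f a + (x - a) / (b - a) * f b := h
    _ = ((b - x) * f a + (x - a) * f b) / (b - a) := by ring

lemma ConvexOn.integral_le_trapezoid {a b : ℝ} {f : ℝ → ℝ} (hf : ConvexOn ℝ (Icc a b) f)
    (hab : a < b) (hint : IntervalIntegrable f volume a b) :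
    ∫ x in a..b, f x ≤ (b - a) * (f a + f b) / 2 := by
  have h_secant_int : IntervalIntegrable (fun x ↦ ((b - x) * f a + (x - a) * f b) / (b - a))
      volume a b :=
    (by fun_prop : Continuous _).intervalIntegrable _ _
  calc ∫ x in a..b, f x ≤ ∫ x in a..b, ((b - x) * f a + (x - a) * f b) / (b - a) :=
        integral_mono_on hab.le hint h_secant_int fun _ hx ↦ hf.le_secant hab hx
    _ = (b - a) * (f a + f b) / 2 := integral_secant hab.ne _ _

theorem stmt0 (a b : ℝ) (hab : a < b) (f : ℝ → ℝ)
    (hconv : ConvexOn ℝ (Set.Icc a b) f)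
    (hint : IntervalIntegrable f MeasureTheory.volume a b) :
    (2 / (b - a)) * ∫ x in a..b, f x ≤ (f a + f b) / 2 + f ((a + b) / 2) := by
  have ham : a < (a + b) / 2 := by linarith
  have hmb : (a + b) / 2 < b := by linarith
  set m := (a + b) / 2
  have hint_left : IntervalIntegrable f volume a m :=
    hint.mono_set (uIcc_subset_uIcc_left (mem_uIcc_of_le ham.le hmb.le))
  have hint_right : IntervalIntegrable f volume m b :=
    hint.mono_set (uIcc_subset_uIcc_right (mem_uIcc_of_le ham.le hmb.le))
  have h_left := (hconv.subset (Icc_subset_Icc_right hmb.le) (convex_Icc a m))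
    |>.integral_le_trapezoid ham hint_left
  have h_right := (hconv.subset (Icc_subset_Icc_left ham.le) (convex_Icc m b))
    |>.integral_le_trapezoid hmb hint_right
  rw [← integral_add_adjacent_intervals hint_left hint_right, div_mul_eq_mul_div,
    div_le_iff₀ (sub_pos.2 hab)]
  rw [show m - a = (b - a) / 2 by ring] at h_left
  rw [show b - m = (b - a) / 2 by ring] at h_right
  linarith
end

section
/- With the partition a = x₀ < x₁ < ... < xₙ = b, the composite Bullen functional satisfies |B_c(g)| ≤ (1/(24(b-a))) Σ_{i=0}^{n-1} (x_{i+1}-x_i)³ · ‖g''‖_∞ for all g ∈ C²[a,b]. -/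
open Set intervalIntegral

/-! Integrating by parts twice, the error of the trapezoidal rule on `[a, b]` is the integral of
`g''` against the nonnegative kernel `(t - a) * (b - t) / 2`, of mass `(b - a) ^ 3 / 12`.
Splitting a cell at its midpoint writes its Bullen term as the sum of the trapezoidal errors of
the two halves, hence bounds it by `(b - a) ^ 3 / 24 * ‖g''‖∞`; summing over the cells gives the
estimate. -/

lemma abs_le_supOn {a b : ℝ} {f : ℝ → ℝ} (hf : ContinuousOn f (Icc a b)) {t : ℝ}
    (ht : t ∈ Icc a b) : |f t| ≤ supOn a b f := by
  have hbdd : BddAbove (range fun x : Icc a b => |f x|) := by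
    simpa only [image_eq_range] using (isCompact_Icc.image_of_continuousOn hf.abs).bddAbove
  exact le_ciSup hbdd ⟨t, ht⟩

lemma integral_kernel (a b : ℝ) : ∫ t in a..b, (t - a) * (b - t) = (b - a) ^ 3 / 6 := by
  have hF : ∀ t ∈ uIcc a b, HasDerivAt (fun u => (u - a) ^ 2 * (b - a) / 2 - (u - a) ^ 3 / 3)
      ((t - a) * (b - t)) t := by
    intro t _
    exact (((((hasDerivAt_id t).sub_const a).pow 2).mul_const (b - a)).div_const 2 |>.sub
      ((((hasDerivAt_id t).sub_const a).pow 3).div_const 3)).congr_deriv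
        (by simp only [id]; push_cast; ring)
  rw [integral_eq_sub_of_hasDerivAt hF (Continuous.intervalIntegrable (by fun_prop) _ _)]
  ring

lemma abs_integral_kernel_mul_le {a b M : ℝ} {f : ℝ → ℝ} (hab : a ≤ b)
    (hM : ∀ t ∈ Icc a b, |f t| ≤ M) :
    |∫ t in a..b, (t - a) * (b - t) * f t| ≤ (b - a) ^ 3 / 6 * M := by
  calc |∫ t in a..b, (t - a) * (b - t) * f t|
      ≤ ∫ t in a..b, (t - a) * (b - t) * M := by
        rw [← Real.norm_eq_abs]
        refine norm_integral_le_of_norm_le hab (Filter.Eventually.of_forall fun t ht => ?_)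
          (Continuous.intervalIntegrable (by fun_prop) _ _)
        have hK : 0 ≤ (t - a) * (b - t) := mul_nonneg (by linarith [ht.1]) (by linarith [ht.2])
        rw [Real.norm_eq_abs, abs_mul, abs_of_nonneg hK]
        exact mul_le_mul_of_nonneg_left (hM t (Ioc_subset_Icc_self ht)) hK
    _ = (b - a) ^ 3 / 6 * M := by rw [integral_mul_const, integral_kernel]

namespace IsC2On

variable {a b c d : ℝ} {g g' g'' : ℝ → ℝ}

lemma mono (hg : IsC2On a b g g' g'') (hcd : Icc c d ⊆ Icc a b) : IsC2On c d g g' g'' :=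
  ⟨fun t ht => (hg.1 t (hcd ht)).mono hcd, fun t ht => (hg.2.1 t (hcd ht)).mono hcd,
    hg.2.2.mono hcd⟩

lemma continuousOn (hg : IsC2On a b g g' g'') : ContinuousOn g (Icc a b) :=
  fun t ht => (hg.1 t ht).continuousWithinAt

lemma continuousOn_deriv (hg : IsC2On a b g g' g'') : ContinuousOn g' (Icc a b) :=
  fun t ht => (hg.2.1 t ht).continuousWithinAt

lemma hasDerivAt (hg : IsC2On a b g g' g'') {t : ℝ} (ht : t ∈ Ioo a b) :
    HasDerivAt g (g' t) t :=
  (hg.1 t (Ioo_subset_Icc_self ht)).hasDerivAt (Icc_mem_nhds ht.1 ht.2)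

lemma hasDerivAt_deriv (hg : IsC2On a b g g' g'') {t : ℝ} (ht : t ∈ Ioo a b) :
    HasDerivAt g' (g'' t) t :=
  (hg.2.1 t (Ioo_subset_Icc_self ht)).hasDerivAt (Icc_mem_nhds ht.1 ht.2)

theorem integral_kernel_mul_eq (hg : IsC2On a b g g' g'') (hab : a ≤ b) :
    ∫ t in a..b, (t - a) * (b - t) * g'' t = (b - a) * (g a + g b) - 2 * ∫ t in a..b, g t := by
  -- `D` is an antiderivative of `(t - a) * (b - t) * g'' t + 2 * g t`.
  set D := fun t => (t - a) * (b - t) * g' t - (a + b - 2 * t) * g t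
  have hD_cont : ContinuousOn D (Icc a b) := by
    apply ContinuousOn.sub
    · exact (Continuous.continuousOn (by fun_prop)).mul hg.continuousOn_deriv
    · exact (Continuous.continuousOn (by fun_prop)).mul hg.continuousOn
  have hD_deriv : ∀ t ∈ Ioo a b, HasDerivAt D ((t - a) * (b - t) * g'' t + 2 * g t) t := by
    intro t ht
    have hK : HasDerivAt (fun u => (u - a) * (b - u)) (a + b - 2 * t) t :=
      (((hasDerivAt_id t).sub_const a).mul ((hasDerivAt_id t).const_sub b)).congr_deriv
        (by simp only [id]; ring)
    have hL : HasDerivAt (fun u => a + b - 2 * u) (-2) t := by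
      simpa using ((hasDerivAt_id t).const_mul (2 : ℝ)).const_sub (a + b)
    exact ((hK.mul (hg.hasDerivAt_deriv ht)).sub (hL.mul (hg.hasDerivAt ht))).congr_deriv
      (by ring)
  have hK_int : IntervalIntegrable (fun t => (t - a) * (b - t) * g'' t) MeasureTheory.volume a b :=
    ((Continuous.continuousOn (by fun_prop)).mul (uIcc_of_le hab ▸ hg.2.2)).intervalIntegrable
  have hg_int : IntervalIntegrable g MeasureTheory.volume a b :=
    (uIcc_of_le hab ▸ hg.continuousOn).intervalIntegrable
  have hftc := integral_eq_sub_of_hasDerivAt_of_le hab hD_cont hD_deriv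
    (hK_int.add (hg_int.const_mul 2))
  rw [integral_add hK_int (hg_int.const_mul 2), integral_const_mul] at hftc
  simp only [D] at hftc
  linarith

end IsC2On

theorem IsC2On.mul_bullen_eq {a b : ℝ} {g g' g'' : ℝ → ℝ} (hg : IsC2On a b g g' g'')
    (hab : a < b) :
    (b - a) * bullen a b g =
      (∫ t in a..(a + b) / 2, (t - a) * ((a + b) / 2 - t) * g'' t) +
        ∫ t in (a + b) / 2..b, (t - (a + b) / 2) * (b - t) * g'' t := by
  set m := (a + b) / 2 with hm
  have ham : a ≤ m := by rw [hm]; linarith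
  have hmb : m ≤ b := by rw [hm]; linarith
  have hg_int : ∀ {c d}, a ≤ c → d ≤ b → c ≤ d → IntervalIntegrable g MeasureTheory.volume c d :=
    fun hc hd hcd => ((hg.continuousOn.mono (Icc_subset_Icc hc hd)).mono
      (uIcc_of_le hcd).subset).intervalIntegrable
  rw [(hg.mono (Icc_subset_Icc le_rfl hmb)).integral_kernel_mul_eq ham,
    (hg.mono (Icc_subset_Icc ham le_rfl)).integral_kernel_mul_eq hmb, bullen,
    ← integral_add_adjacent_intervals (hg_int le_rfl hmb ham) (hg_int ham le_rfl hmb)]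
  have hba : b - a ≠ 0 := by linarith
  field_simp
  ring

theorem IsC2On.abs_mul_bullen_le {a b M : ℝ} {g g' g'' : ℝ → ℝ} (hg : IsC2On a b g g' g'')
    (hab : a < b) (hM : ∀ t ∈ Icc a b, |g'' t| ≤ M) :
    |(b - a) * bullen a b g| ≤ (b - a) ^ 3 / 24 * M := by
  set m := (a + b) / 2 with hm
  have ham : a ≤ m := by rw [hm]; linarith
  have hmb : m ≤ b := by rw [hm]; linarith
  have hleft := abs_integral_kernel_mul_le ham fun t ht => hM t (Icc_subset_Icc le_rfl hmb ht)
  have hright := abs_integral_kernel_mul_le hmb fun t ht => hM t (Icc_subset_Icc ham le_rfl ht)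
  calc |(b - a) * bullen a b g|
      ≤ (m - a) ^ 3 / 6 * M + (b - m) ^ 3 / 6 * M := by
        rw [hg.mul_bullen_eq hab]
        exact (abs_add_le _ _).trans (add_le_add hleft hright)
    _ = (b - a) ^ 3 / 24 * M := by ring

theorem stmt7_general (a b : ℝ) (n : ℕ) (x : ℕ → ℝ)
    (hx0 : x 0 = a) (hxn : x n = b)
    (hmono : ∀ i < n, x i < x (i + 1))
    (g g' g'' : ℝ → ℝ) (hg : IsC2On a b g g' g'') :
    |bullenC a b n x g| ≤
      (1 / (24 * (b - a))) * (∑ i ∈ Finset.range n, (x (i + 1) - x i) ^ 3)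
        * supOn a b g'' := by
  have hx : MonotoneOn x (Iic n) := (strictMonoOn_Iic_of_lt_succ fun i hi => by
    simpa only [Order.succ_eq_add_one] using hmono i hi).monotoneOn
  have hxi : ∀ i ≤ n, x i ∈ Icc a b := fun i hi => by
    rw [← hx0, ← hxn]
    exact ⟨hx (Nat.zero_le n) hi (Nat.zero_le i), hx hi (mem_Iic.2 le_rfl) hi⟩
  have hscale : 0 ≤ 1 / (b - a) :=
    one_div_nonneg.2 (sub_nonneg.2 ((hxi n le_rfl).1.trans (hxi n le_rfl).2))
  have hcell : ∀ i ∈ Finset.range n, |(x (i + 1) - x i) * bullen (x i) (x (i + 1)) g| ≤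
      (x (i + 1) - x i) ^ 3 / 24 * supOn a b g'' := fun i hi => by
    have hi := Finset.mem_range.1 hi
    have hsub := Icc_subset_Icc (hxi i hi.le).1 (hxi (i + 1) hi).2
    exact (hg.mono hsub).abs_mul_bullen_le (hmono i hi)
      fun t ht => abs_le_supOn hg.2.2 (hsub ht)
  calc |bullenC a b n x g|
      = 1 / (b - a) * |∑ i ∈ Finset.range n, (x (i + 1) - x i) * bullen (x i) (x (i + 1)) g| := by
        rw [bullenC, abs_mul, abs_of_nonneg hscale]; rfl
    _ ≤ 1 / (b - a) * ∑ i ∈ Finset.range n, (x (i + 1) - x i) ^ 3 / 24 * supOn a b g'' :=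
        mul_le_mul_of_nonneg_left ((Finset.abs_sum_le_sum_abs _ _).trans
          (Finset.sum_le_sum hcell)) hscale
    _ = _ := by
        rw [← Finset.sum_mul, ← Finset.sum_div, mul_comm 24, ← div_div]
        ring

theorem stmt7 (a b : ℝ) (hab : a < b) (n : ℕ) (x : ℕ → ℝ)
    (hx0 : x 0 = a) (hxn : x n = b)
    (hmono : ∀ i < n, x i < x (i + 1))
    (g g' g'' : ℝ → ℝ) (hg : IsC2On a b g g' g'') :
    |bullenC a b n x g| ≤
      (1 / (24 * (b - a))) * (∑ i ∈ Finset.range n, (x (i + 1) - x i) ^ 3)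
        * supOn a b g'' :=
  stmt7_general a b n x hx0 hxn hmono g g' g'' hg
end

section
/- For every f ∈ C[a,b] and 0 < t ≤ (b-a)/2, K(f; t²; C[a,b], C²[a,b]) ≤ (9/4) ω₂(f; t), where K(f; t²) = inf { ‖f-g‖_∞ + t²‖g''‖_∞ : g ∈ C²[a,b] } and ω₂ is the second modulus of smoothness. -/
open Set intervalIntegral

/-!
Extend `f` continuously beyond `[a, b]` to a function `φ` whose second differences
`Δ²_s φ(x)`, `x ∈ [a, b]`, `0 ≤ s ≤ t`, are at most `(3/2) ω₂(f, t)`. The value of `φ` at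
`a - d` must lie in an interval cut out by the second differences centred at `a + w` with step
`w + d`; as `w` varies these constraints oscillate by at most `3 ω₂` (a difference of two of them
is a sum of three second differences of `f`), so the interval is nonempty, and clamping `f a`
into it is a continuous choice. Then `g = Δ²_t G / t²` with `G'' = φ` is `C²` with
`g'' = Δ²_t φ / t²`, so `t² ‖g''‖ ≤ (3/2) ω₂`, while Taylor's formula in the step gives
`‖f - g‖ ≤ (3/4) ω₂`.
-/

def secondDiff (φ : ℝ → ℝ) (s x : ℝ) : ℝ := φ (x + s) - 2 * φ x + φ (x - s)

lemma secondDiff_neg (φ : ℝ → ℝ) (s x : ℝ) : secondDiff φ (-s) x = secondDiff φ s x := by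
  simp only [secondDiff, ← sub_eq_add_neg, sub_neg_eq_add]
  ring

lemma secondDiff_congr {φ ψ : ℝ → ℝ} {S : Set ℝ} (h : EqOn φ ψ S) {s x : ℝ} (h₁ : x - s ∈ S)
    (h₂ : x ∈ S) (h₃ : x + s ∈ S) : secondDiff φ s x = secondDiff ψ s x := by
  simp only [secondDiff, h h₁, h h₂, h h₃]

lemma secondDiff_comp_sub_const (φ : ℝ → ℝ) (a s x : ℝ) :
    secondDiff (fun y => φ (y - a)) s x = secondDiff φ s (x - a) := by
  simp only [secondDiff]
  ring_nf

lemma secondDiff_comp_const_sub (φ : ℝ → ℝ) (b s x : ℝ) :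
    secondDiff (fun y => φ (b - y)) s x = secondDiff φ s (b - x) := by
  simp only [secondDiff]
  ring_nf

lemma hasDerivAt_secondDiff {φ φ' : ℝ → ℝ} (hφ : ∀ y, HasDerivAt φ (φ' y) y) (s x : ℝ) :
    HasDerivAt (secondDiff φ s) (secondDiff φ' s x) x :=
  (((hφ _).comp_add_const x s).sub ((hφ x).const_mul 2)).add ((hφ _).comp_sub_const x s)

section Omega2

variable {a b t : ℝ} {f : ℝ → ℝ}

lemma bddAbove_omega2_set (hf : ContinuousOn f (Icc a b)) :
    BddAbove {v : ℝ | ∃ x s : ℝ, 0 ≤ s ∧ s ≤ t ∧ x - s ∈ Icc a b ∧ x + s ∈ Icc a b ∧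
      v = |f (x + s) - 2 * f x + f (x - s)|} := by
  obtain ⟨C, hC⟩ := isCompact_Icc.exists_bound_of_continuousOn hf
  refine ⟨4 * C, ?_⟩
  rintro v ⟨x, s, hs, -, hl, hr, rfl⟩
  have hx : x ∈ Icc a b := ⟨by linarith [hl.1], by linarith [hr.2]⟩
  have bound : ∀ y ∈ Icc a b, -C ≤ f y ∧ f y ≤ C := fun y hy => abs_le.mp (hC y hy)
  obtain ⟨h₁, h₂⟩ := bound _ hl
  obtain ⟨h₃, h₄⟩ := bound _ hx
  obtain ⟨h₅, h₆⟩ := bound _ hr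
  exact abs_le.mpr ⟨by linarith, by linarith⟩

lemma abs_secondDiff_le_omega2 (hf : ContinuousOn f (Icc a b)) {x s : ℝ} (hs : |s| ≤ t)
    (hl : x - s ∈ Icc a b) (hr : x + s ∈ Icc a b) : |secondDiff f s x| ≤ omega2 a b f t := by
  wlog hs0 : 0 ≤ s generalizing s
  · rw [← secondDiff_neg]
    exact this (by rwa [abs_neg]) (by rwa [sub_neg_eq_add]) (by rwa [← sub_eq_add_neg])
      (by linarith)
  exact le_csSup (bddAbove_omega2_set hf) ⟨x, s, hs0, (abs_of_nonneg hs0).symm.trans_le hs,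
    hl, hr, rfl⟩

lemma abs_sub_two_mul_add_le_omega2 (hf : ContinuousOn f (Icc a b)) {p q r : ℝ}
    (hp : p ∈ Icc a b) (hr : r ∈ Icc a b) (hq : p + r = 2 * q) (hpr : |r - p| ≤ 2 * t) :
    |f r - 2 * f q + f p| ≤ omega2 a b f t := by
  have hs : |(r - p) / 2| ≤ t := by rw [abs_div, abs_two]; linarith
  have := abs_secondDiff_le_omega2 (x := q) hf hs (by convert hp using 1; linarith)
    (by convert hr using 1; linarith)
  rwa [secondDiff, show q + (r - p) / 2 = r by linarith, show q - (r - p) / 2 = p by linarith]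
    at this

lemma omega2_nonneg (hf : ContinuousOn f (Icc a b)) (hab : a ≤ b) (ht : 0 ≤ t) :
    0 ≤ omega2 a b f t :=
  (abs_nonneg _).trans <| abs_secondDiff_le_omega2 (x := a) (s := 0) hf (by simpa using ht)
    (by simpa using hab) (by simpa using hab)

end Omega2

section KFunctional

variable {a b : ℝ}

lemma supOn_nonneg (φ : ℝ → ℝ) : 0 ≤ supOn a b φ :=
  Real.iSup_nonneg fun _ => abs_nonneg _

lemma supOn_le (hab : a ≤ b) {φ : ℝ → ℝ} {C : ℝ} (h : ∀ x ∈ Icc a b, |φ x| ≤ C) :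
    supOn a b φ ≤ C :=
  haveI : Nonempty (Icc a b) := (nonempty_Icc.mpr hab).to_subtype
  ciSup_le fun x => h x x.2

lemma KF_le {τ : ℝ} (hτ : 0 ≤ τ) (f : ℝ → ℝ) {g g' g'' : ℝ → ℝ}
    (hg : IsC2On a b g g' g'') :
    KF a b τ f ≤ supOn a b (fun x => f x - g x) + τ * supOn a b g'' := by
  refine csInf_le ⟨0, ?_⟩ ⟨g, g', g'', hg, rfl⟩
  rintro v ⟨g, g', g'', -, rfl⟩
  have := supOn_nonneg (a := a) (b := b) g''
  have := supOn_nonneg (a := a) (b := b) (fun x => f x - g x)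
  positivity

end KFunctional

lemma abs_le_of_hasDerivAt_of_abs_deriv2_le {φ φ' φ'' : ℝ → ℝ} {t C : ℝ} (ht : 0 ≤ t)
    (h0 : φ 0 = 0) (h0' : φ' 0 = 0) (hφ : ∀ u, HasDerivAt φ (φ' u) u)
    (hφ' : ∀ u, HasDerivAt φ' (φ'' u) u) (hC : ∀ u ∈ Icc 0 t, |φ'' u| ≤ C) :
    |φ t| ≤ C * t ^ 2 / 2 := by
  have hlin (u : ℝ) : HasDerivAt (fun u => C * u) C u := by
    simpa using (hasDerivAt_id u).const_mul C
  have hquad (u : ℝ) : HasDerivAt (fun u => C * u ^ 2 / 2) (C * u) u :=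
    (((hasDerivAt_pow 2 u).const_mul C).div_const 2).congr_deriv (by push_cast; ring)
  have h1 : ∀ u ∈ Icc 0 t, ‖φ' u‖ ≤ C * u :=
    image_norm_le_of_norm_deriv_right_le_deriv_boundary
      (fun u _ => (hφ' u).continuousAt.continuousWithinAt)
      (fun u _ => (hφ' u).hasDerivWithinAt) (by simp [h0']) hlin
      (fun u hu => hC u (Ico_subset_Icc_self hu))
  exact image_norm_le_of_norm_deriv_right_le_deriv_boundary
    (fun u _ => (hφ u).continuousAt.continuousWithinAt)
    (fun u _ => (hφ u).hasDerivWithinAt) (by simp [h0]) hquad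
    (fun u hu => h1 u (Ico_subset_Icc_self hu)) (right_mem_Icc.mpr ht)

lemma abs_secondDiff_div_sq_sub_le {G F φ : ℝ → ℝ} {t B x : ℝ} (ht : 0 < t)
    (hG : ∀ y, HasDerivAt G (F y) y) (hF : ∀ y, HasDerivAt F (φ y) y)
    (hB : ∀ s ∈ Icc 0 t, |secondDiff φ s x| ≤ B) :
    |secondDiff G t x / t ^ 2 - φ x| ≤ B / 2 := by
  have taylor : |secondDiff G t x - t ^ 2 * φ x| ≤ B * t ^ 2 / 2 := by
    refine abs_le_of_hasDerivAt_of_abs_deriv2_le (φ := fun u => secondDiff G u x - u ^ 2 * φ x)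
      (φ' := fun u => F (x + u) - F (x - u) - 2 * u * φ x) ht.le ?_ ?_ (fun u => ?_)
      (fun u => ?_) hB
    · simp only [secondDiff, add_zero, sub_zero]; ring
    · simp
    · have := (((hG _).comp_const_add x u).sub_const (2 * G x)).add ((hG _).comp_const_sub x u)
      exact (this.sub ((hasDerivAt_pow 2 u).mul_const (φ x))).congr_deriv (by push_cast; ring)
    · have := ((hF _).comp_const_add x u).sub ((hF _).comp_const_sub x u)
      exact (this.sub (((hasDerivAt_id u).const_mul 2).mul_const (φ x))).congr_deriv
        (by unfold secondDiff; ring)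
  have ht2 : 0 < t ^ 2 := pow_pos ht 2
  rw [show secondDiff G t x / t ^ 2 - φ x = (secondDiff G t x - t ^ 2 * φ x) / t ^ 2 by
    field_simp, abs_div, abs_of_pos ht2, div_le_iff₀ ht2]
  linarith

theorem KF_le_of_extension {a b t B : ℝ} {f φ : ℝ → ℝ} (hab : a ≤ b) (ht : 0 < t)
    (hφ : Continuous φ) (hφf : EqOn φ f (Icc a b))
    (hB : ∀ x ∈ Icc a b, ∀ s ∈ Icc 0 t, |secondDiff φ s x| ≤ B) :
    KF a b (t ^ 2) f ≤ 3 / 2 * B := by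
  have ht2 : 0 < t ^ 2 := pow_pos ht 2
  set F := fun y => ∫ u in (0 : ℝ)..y, φ u
  have hF (y : ℝ) : HasDerivAt F (φ y) y := (hφ.integral_hasStrictDerivAt 0 y).hasDerivAt
  have hFc : Continuous F := continuous_iff_continuousAt.2 fun y => (hF y).continuousAt
  set G := fun y => ∫ u in (0 : ℝ)..y, F u
  have hG (y : ℝ) : HasDerivAt G (F y) y := (hFc.integral_hasStrictDerivAt 0 y).hasDerivAt
  have hC2 : IsC2On a b (fun x => secondDiff G t x / t ^ 2) (fun x => secondDiff F t x / t ^ 2)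
      (fun x => secondDiff φ t x / t ^ 2) :=
    ⟨fun x _ => ((hasDerivAt_secondDiff hG t x).div_const _).hasDerivWithinAt,
      fun x _ => ((hasDerivAt_secondDiff hF t x).div_const _).hasDerivWithinAt,
      by unfold secondDiff; fun_prop⟩
  have hsup₁ : supOn a b (fun x => f x - secondDiff G t x / t ^ 2) ≤ B / 2 :=
    supOn_le hab fun x hx => by
      rw [← hφf hx, abs_sub_comm]
      exact abs_secondDiff_div_sq_sub_le ht hG hF (hB x hx)
  have hsup₂ : supOn a b (fun x => secondDiff φ t x / t ^ 2) ≤ B / t ^ 2 :=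
    supOn_le hab fun x hx => by
      rw [abs_div, abs_of_pos ht2]
      exact div_le_div_of_nonneg_right (hB x hx t ⟨ht.le, le_rfl⟩) ht2.le
  calc KF a b (t ^ 2) f ≤ _ := KF_le ht2.le f hC2
    _ ≤ B / 2 + t ^ 2 * (B / t ^ 2) := by gcongr
    _ = 3 / 2 * B := by field_simp; ring

theorem continuousOn_sSup_image_Icc {A : ℝ → ℝ → ℝ} (hA : Continuous (Function.uncurry A))
    {l r : ℝ → ℝ} (hl : Continuous l) (hr : Continuous r) :
    ContinuousOn (fun d => sSup (A d '' Icc (l d) (r d))) {d | l d ≤ r d} := by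
  have hcont : Continuous fun d =>
      sSup ((fun θ : ℝ => A d (l d + θ • (r d - l d))) '' Icc 0 1) :=
    isCompact_Icc.continuous_sSup <|
      hA.comp (f := fun p : ℝ × ℝ => (p.1, l p.1 + p.2 • (r p.1 - l p.1))) (by fun_prop)
  refine hcont.continuousOn.congr fun d hd => ?_
  rw [← segment_eq_Icc (show l d ≤ r d from hd), segment_eq_image', image_image]

def BoundedSecondDiffOn (h : ℝ → ℝ) (S : Set ℝ) (W : ℝ) : Prop :=
  ∀ p ∈ S, ∀ q, ∀ r ∈ S, p + r = 2 * q → |h r - 2 * h q + h p| ≤ W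

namespace BoundedSecondDiffOn

variable {h : ℝ → ℝ} {t W : ℝ}

lemma nonneg {S : Set ℝ} (hW : BoundedSecondDiffOn h S W) {p : ℝ} (hp : p ∈ S) : 0 ≤ W := by
  have := hW p hp p p hp (two_mul p).symm
  rwa [show h p - 2 * h p + h p = 0 by ring, abs_zero] at this

lemma comp_const_add {c l : ℝ} (hW : BoundedSecondDiffOn h (Icc c (c + l)) W) :
    BoundedSecondDiffOn (fun y => h (c + y)) (Icc 0 l) W :=
  fun p hp q r hr hq => hW (c + p) ⟨by linarith [hp.1], by linarith [hp.2]⟩ (c + q) (c + r)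
    ⟨by linarith [hr.1], by linarith [hr.2]⟩ (by linarith)

lemma comp_const_sub {c l : ℝ} (hW : BoundedSecondDiffOn h (Icc (c - l) c) W) :
    BoundedSecondDiffOn (fun y => h (c - y)) (Icc 0 l) W :=
  fun p hp q r hr hq => hW (c - p) ⟨by linarith [hp.2], by linarith [hp.1]⟩ (c - q) (c - r)
    ⟨by linarith [hr.2], by linarith [hr.1]⟩ (by linarith)

-- With `Δ(p, q, r) = h r - 2 h q + h p` and `c = w' + (w + d) / 2`, the difference equals
-- `Δ(2w + d, c, 2w' - w) - Δ(w, c, 2w' + d) - Δ(w, w', 2w' - w)`.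
lemma abs_sub_le (hW : BoundedSecondDiffOn h (Icc 0 (2 * t)) W) {d w w' : ℝ} (hd : 0 ≤ d)
    (hw : w ∈ Icc 0 (t - d)) (hw' : w' ∈ Icc 0 (t - d)) :
    |(h (2 * w + d) - 2 * h w) - (h (2 * w' + d) - 2 * h w')| ≤ 3 * W := by
  wlog hww : w ≤ w' generalizing w w'
  · rw [abs_sub_comm]
    exact this hw' hw (by linarith)
  obtain ⟨hw₀, hw₁⟩ := hw
  obtain ⟨hw₀', hw₁'⟩ := hw'
  have m₁ := abs_le.mp (hW w ⟨by linarith, by linarith⟩ w' (2 * w' - w)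
    ⟨by linarith, by linarith⟩ (by ring))
  have m₂ := abs_le.mp (hW w ⟨by linarith, by linarith⟩ (w' + (w + d) / 2) (2 * w' + d)
    ⟨by linarith, by linarith⟩ (by ring))
  have m₃ := abs_le.mp (hW (2 * w + d) ⟨by linarith, by linarith⟩ (w' + (w + d) / 2)
    (2 * w' - w) ⟨by linarith, by linarith⟩ (by ring))
  exact abs_le.mpr ⟨by linarith, by linarith⟩

-- `E d` stands for the missing value `h (-d)`.
theorem exists_boundary_values (hW : BoundedSecondDiffOn h (Icc 0 (2 * t)) W)
    (hh : Continuous h) (ht : 0 ≤ t) :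
    ∃ E : ℝ → ℝ, Continuous E ∧ E 0 = h 0 ∧
      ∀ d ∈ Icc 0 t, ∀ w ∈ Icc 0 (t - d), |h (2 * w + d) - 2 * h w + E d| ≤ 3 / 2 * W := by
  set A : ℝ → ℝ → ℝ := fun d w => h (2 * w + d) - 2 * h w
  have hA : Continuous (Function.uncurry A) := by fun_prop
  set M := fun d => sSup (A d '' Icc 0 (t - d))
  set N := fun d => sSup ((fun w => -A d w) '' Icc 0 (t - d))
  have hM : ContinuousOn M {d | 0 ≤ t - d} := continuousOn_sSup_image_Icc hA continuous_const
    (by fun_prop)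
  have hN : ContinuousOn N {d | 0 ≤ t - d} := continuousOn_sSup_image_Icc
    (A := fun d w => -A d w) hA.neg continuous_const (by fun_prop)
  have le_M (d w : ℝ) (hw : w ∈ Icc 0 (t - d)) : A d w ≤ M d :=
    le_csSup (isCompact_Icc.bddAbove_image (hA.uncurry_left d).continuousOn)
      (mem_image_of_mem _ hw)
  have le_N (d w : ℝ) (hw : w ∈ Icc 0 (t - d)) : -A d w ≤ N d :=
    le_csSup (isCompact_Icc.bddAbove_image (hA.uncurry_left d).neg.continuousOn)
      (mem_image_of_mem (fun w => -A d w) hw)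
  have M_add_N (d : ℝ) (hd : d ∈ Icc 0 t) : M d + N d ≤ 3 * W := by
    have hne : (Icc 0 (t - d)).Nonempty := nonempty_Icc.mpr (by linarith [hd.2])
    suffices N d ≤ 3 * W - M d by linarith
    refine csSup_le (hne.image _) (forall_mem_image.mpr fun w hw => ?_)
    suffices M d ≤ 3 * W + A d w by linarith
    refine csSup_le (hne.image _) (forall_mem_image.mpr fun w' hw' => ?_)
    linarith [(abs_le.mp (hW.abs_sub_le hd.1 hw' hw)).2]
  have hne₀ : (Icc 0 (t - 0)).Nonempty := nonempty_Icc.mpr (by linarith)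
  have at_zero (w : ℝ) (hw : w ∈ Icc 0 (t - 0)) : |A 0 w + h 0| ≤ W :=
    hW 0 (left_mem_Icc.mpr (by linarith)) w (2 * w + 0) ⟨by linarith [hw.1], by linarith [hw.2]⟩
      (by ring)
  have hM₀ : M 0 ≤ W - h 0 := csSup_le (hne₀.image _) (forall_mem_image.mpr fun w hw => by
    linarith [(abs_le.mp (at_zero w hw)).2])
  have hN₀ : N 0 ≤ W + h 0 := csSup_le (hne₀.image _) (forall_mem_image.mpr fun w hw => by
    linarith [(abs_le.mp (at_zero w hw)).1])
  have hW₀ : 0 ≤ W := hW.nonneg (left_mem_Icc.mpr (by linarith))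
  have hclamp : Continuous fun d => min d t := by fun_prop
  have hmaps (d : ℝ) : min d t ∈ {d | 0 ≤ t - d} := sub_nonneg.mpr (min_le_right d t)
  refine ⟨fun d => max (N (min d t) - 3 / 2 * W) (min (h 0) (3 / 2 * W - M (min d t))),
    ((hN.comp_continuous hclamp hmaps).sub continuous_const).max
      (continuous_const.min (continuous_const.sub (hM.comp_continuous hclamp hmaps))), ?_, ?_⟩
  · have : h 0 ≤ 3 / 2 * W - M 0 := by linarith
    simp only [min_eq_left ht, min_eq_left this]
    exact max_eq_right (by linarith)
  · rintro d hd w hw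
    simp only [min_eq_left hd.2]
    have := M_add_N d hd
    have := le_M d w hw
    have := le_N d w hw
    refine abs_le.mpr ⟨?_, ?_⟩
    · linarith [le_max_left (N d - 3 / 2 * W) (min (h 0) (3 / 2 * W - M d))]
    · linarith [max_le (by linarith : N d - 3 / 2 * W ≤ 3 / 2 * W - M d)
        (min_le_right (h 0) (3 / 2 * W - M d))]

theorem exists_extension (hW : BoundedSecondDiffOn h (Icc 0 (2 * t)) W) (hh : Continuous h)
    (ht : 0 ≤ t) :
    ∃ H : ℝ → ℝ, Continuous H ∧ EqOn H h (Ici 0) ∧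
      ∀ s ∈ Icc 0 t, ∀ x ∈ Icc 0 s, |secondDiff H s x| ≤ 3 / 2 * W := by
  obtain ⟨E, hE, hE₀, hEW⟩ := hW.exists_boundary_values hh ht
  set H : ℝ → ℝ := fun y => if y ≤ 0 then E (-y) else h y
  have hEq : EqOn H h (Ici 0) := by
    intro y hy
    rcases (mem_Ici.mp hy).eq_or_lt with rfl | hy
    · simp [H, hE₀]
    · simp [H, not_le.mpr hy]
  have hH : Continuous H := (hE.comp continuous_neg).if_le hh continuous_id continuous_const
    fun y (hy : y = 0) => by simp [hy, hE₀]
  refine ⟨H, hH, hEq, ?_⟩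
  rintro s ⟨hs₀, hst⟩ x ⟨hx₀, hxs⟩
  have := hEW (s - x) ⟨by linarith, by linarith⟩ x ⟨hx₀, by linarith⟩
  have hneg : H (x - s) = E (s - x) := by
    simp only [H, if_pos (by linarith : x - s ≤ 0), neg_sub]
  rwa [secondDiff, hEq (show 0 ≤ x + s by linarith), hEq hx₀, hneg,
    ← show 2 * x + (s - x) = x + s by ring]

end BoundedSecondDiffOn

lemma boundedSecondDiffOn_omega2 {a b t : ℝ} {f g : ℝ → ℝ} (hf : ContinuousOn f (Icc a b))
    (hgf : EqOn g f (Icc a b)) {u v : ℝ} (hu : a ≤ u) (hv : v ≤ b) (huv : v - u ≤ 2 * t) :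
    BoundedSecondDiffOn g (Icc u v) (omega2 a b f t) := by
  intro p hp q r hr hq
  have mem (y : ℝ) (hy : y ∈ Icc u v) : y ∈ Icc a b := ⟨hu.trans hy.1, hy.2.trans hv⟩
  have hq' : q ∈ Icc a b := mem q ⟨by linarith [hp.1, hr.1], by linarith [hp.2, hr.2]⟩
  rw [hgf (mem p hp), hgf hq', hgf (mem r hr)]
  exact abs_sub_two_mul_add_le_omega2 hf (mem p hp) (mem r hr) hq
    (abs_sub_le_iff.mpr ⟨by linarith [hp.1, hr.2], by linarith [hp.2, hr.1]⟩)

theorem exists_extension_abs_secondDiff_le_omega2 {a b t : ℝ} {f : ℝ → ℝ}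
    (hf : ContinuousOn f (Icc a b)) (ht : 0 ≤ t) (h2t : 2 * t ≤ b - a) :
    ∃ φ : ℝ → ℝ, Continuous φ ∧ EqOn φ f (Icc a b) ∧
      ∀ x ∈ Icc a b, ∀ s ∈ Icc 0 t, |secondDiff φ s x| ≤ 3 / 2 * omega2 a b f t := by
  have hab : a ≤ b := by linarith
  set g := fun x => f (projIcc a b hab x)
  have hg : Continuous g :=
    hf.comp_continuous (continuous_subtype_val.comp continuous_projIcc) fun x =>
      (projIcc a b hab x).2
  have hgf : EqOn g f (Icc a b) := fun x hx => by simp [g, projIcc_of_mem hab hx]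
  obtain ⟨L, hL, hLg, hLW⟩ := (boundedSecondDiffOn_omega2 hf hgf le_rfl (by linarith)
    (by linarith : a + 2 * t - a ≤ 2 * t)).comp_const_add.exists_extension (by fun_prop) ht
  obtain ⟨R, hR, hRg, hRW⟩ := (boundedSecondDiffOn_omega2 hf hgf (by linarith) le_rfl
    (by linarith : b - (b - 2 * t) ≤ 2 * t)).comp_const_sub.exists_extension (by fun_prop) ht
  have hLg' (y : ℝ) (hy : a ≤ y) : L (y - a) = g y := by
    simpa using hLg (show 0 ≤ y - a by linarith)
  have hRg' (y : ℝ) (hy : y ≤ b) : R (b - y) = g y := by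
    simpa using hRg (show 0 ≤ b - y by linarith)
  set φ := fun y => if y ≤ b then L (y - a) else R (b - y)
  have hφL : EqOn φ (fun y => L (y - a)) (Iic b) := fun y hy => if_pos hy
  have hφR : EqOn φ (fun y => R (b - y)) (Ici a) := fun y (hy : a ≤ y) => by
    by_cases hyb : y ≤ b
    · simp only [φ, if_pos hyb, hLg' y hy, hRg' y hyb]
    · exact if_neg hyb
  have hφf : EqOn φ f (Icc a b) := fun y hy => (hφL hy.2).trans ((hLg' y hy.1).trans (hgf hy))
  refine ⟨φ, (hL.comp (continuous_sub_right a)).if_le (hR.comp (continuous_sub_left b))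
    continuous_id continuous_const fun y (hy : y = b) => ?_, hφf, ?_⟩
  · show L (y - a) = R (b - y)
    rw [hy, hLg' b hab, hRg' b le_rfl]
  -- As `2 * t ≤ b - a`, a second difference centred in `[a, b]` leaves it on one side at most.
  rintro x ⟨hax, hxb⟩ s ⟨hs₀, hst⟩
  rcases lt_or_ge (x - s) a with hl | hl
  · rw [secondDiff_congr hφL (mem_Iic.mpr (by linarith)) (mem_Iic.mpr hxb)
      (mem_Iic.mpr (by linarith)), secondDiff_comp_sub_const]
    exact hLW s ⟨hs₀, hst⟩ (x - a) ⟨by linarith, by linarith⟩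
  rcases le_or_gt (x + s) b with hr | hr
  · rw [secondDiff_congr hφf ⟨hl, by linarith⟩ ⟨hax, hxb⟩ ⟨by linarith, hr⟩]
    linarith [abs_secondDiff_le_omega2 hf (abs_le.mpr ⟨by linarith, hst⟩) ⟨hl, by linarith⟩
      ⟨by linarith, hr⟩, omega2_nonneg hf hab ht]
  · rw [secondDiff_congr hφR (mem_Ici.mpr hl) (mem_Ici.mpr hax) (mem_Ici.mpr (by linarith)),
      secondDiff_comp_const_sub]
    exact hRW s ⟨hs₀, hst⟩ (b - x) ⟨by linarith, by linarith⟩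

theorem stmt18_general (a b : ℝ) (f : ℝ → ℝ)
    (hf : ContinuousOn f (Set.Icc a b)) (t : ℝ) (ht0 : 0 < t) (ht : t ≤ (b - a) / 2) :
    KF a b (t ^ 2) f ≤ (9 / 4) * omega2 a b f t := by
  obtain ⟨φ, hφ, hφf, hφW⟩ :=
    exists_extension_abs_secondDiff_le_omega2 hf ht0.le (by linarith)
  calc KF a b (t ^ 2) f ≤ 3 / 2 * (3 / 2 * omega2 a b f t) :=
        KF_le_of_extension (by linarith) ht0 hφ hφf hφW
    _ = 9 / 4 * omega2 a b f t := by ring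

theorem stmt18 (a b : ℝ) (hab : a < b) (f : ℝ → ℝ)
    (hf : ContinuousOn f (Set.Icc a b)) (t : ℝ) (ht0 : 0 < t) (ht : t ≤ (b - a) / 2) :
    KF a b (t ^ 2) f ≤ (9 / 4) * omega2 a b f t :=
  stmt18_general a b f hf t ht0 ht
end
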